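/- arXiv:1507.06092 — 7 statements merged into one kernel-verified Lean document; each statement's English description precedes it below -/
import Mathlib

section
/- Let F be a continuous CDF of a nonnegative random variable, and suppose 0 ≤ c_F⁻ ≤ c_F ≤ c_F⁺ < v with c_F⁺ > c_F⁻. Define z̃(p_F) = c_F·p_F + v·∫₀^{p̃-p̄_F} F(s)ds + c_F⁺·∫_{p̃-p̄_F}^{p̃-p_F} F(s)ds + c_F⁻·∫_{p̃-p_F}^{p̃} F(s)ds − c_F⁻·p_F for p_F ∈ [0, p̄_F]. Then z̃ is convex on [0, p̄_F]. -/
/-!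
With `G b = ∫ s in 0..b, F s`, the three integrals telescope and
`z̃ p = (c_F⁺ - c_F⁻) * G (p̃ - p) + (affine in p)`. Since `G' = F` is monotone, `G` is convex,
and reflecting its argument and scaling by `c_F⁺ - c_F⁻ ≥ 0` keeps it convex.
-/

open intervalIntegral Set

theorem Monotone.convexOn_intervalIntegral {f : ℝ → ℝ} (hf : Monotone f) (hc : Continuous f)
    (a : ℝ) : ConvexOn ℝ univ fun b => ∫ x in a..b, f x := by
  have hd (b : ℝ) : HasDerivAt (fun b => ∫ x in a..b, f x) (f b) b :=
    (hc.integral_hasStrictDerivAt a b).hasDerivAt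
  refine MonotoneOn.convexOn_of_deriv convex_univ
    (fun b _ => (hd b).continuousAt.continuousWithinAt)
    (fun b _ => (hd b).differentiableAt.differentiableWithinAt) ?_
  intro x _ y _ hxy
  rw [(hd x).deriv, (hd y).deriv]
  exact hf hxy

theorem ConvexOn.comp_const_sub {g : ℝ → ℝ} (hg : ConvexOn ℝ univ g) (t : ℝ) :
    ConvexOn ℝ univ fun x => g (t - x) := by
  refine ⟨convex_univ, fun x _ y _ a b ha hb hab => ?_⟩
  have hcomb : t - (a • x + b • y) = a • (t - x) + b • (t - y) := by
    simp only [smul_eq_mul]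
    linear_combination t * hab.symm
  simpa only [hcomb] using hg.2 (mem_univ _) (mem_univ _) ha hb hab

theorem convexOn_univ_mul_add (c d : ℝ) : ConvexOn ℝ univ fun x : ℝ => c * x + d :=
  ⟨convex_univ, fun x _ y _ a b _ _ hab => le_of_eq <| by
    simp only [smul_eq_mul]
    linear_combination d * hab.symm⟩

theorem stmt1_general
    (F : ℝ → ℝ) (v cF cFu cFd pbF pt : ℝ)
    (hFcont : Continuous F) (hFmono : Monotone F)
    (h4 : cFd < cFu)
    (ztilde : ℝ → ℝ)
    (hz : ztilde = fun pF => cF * pF + v * (∫ s in (0:ℝ)..(pt - pbF), F s)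
        + cFu * (∫ s in (pt - pbF)..(pt - pF), F s)
        + cFd * (∫ s in (pt - pF)..pt, F s) - cFd * pF) :
    ConvexOn ℝ (Set.Icc (0 : ℝ) pbF) ztilde := by
  set G : ℝ → ℝ := fun b => ∫ s in (0:ℝ)..b, F s
  have hzG : ztilde = fun pF => (cFu - cFd) * G (pt - pF)
      + ((cF - cFd) * pF + (v * G (pt - pbF) - cFu * G (pt - pbF) + cFd * G pt)) := by
    subst hz
    funext pF
    have hI (a b : ℝ) := hFcont.intervalIntegrable (μ := MeasureTheory.volume) a b
    rw [← integral_interval_sub_left (hI 0 (pt - pF)) (hI 0 (pt - pbF)),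
      ← integral_interval_sub_left (hI 0 pt) (hI 0 (pt - pF))]
    ring
  have hconv : ConvexOn ℝ univ ztilde := by
    rw [hzG]
    exact (((hFmono.convexOn_intervalIntegral hFcont 0).comp_const_sub pt).smul
      (sub_nonneg.2 h4.le)).add (convexOn_univ_mul_add _ _)
  exact hconv.subset (subset_univ _) (convex_Icc 0 pbF)

/-- convexity of the expected two-stage portfolio cost z̃ on [0, p̄_F]. -/
theorem stmt1
    (F : ℝ → ℝ) (v cF cFu cFd pbF pt : ℝ)
    (hFcont : Continuous F) (hFmono : Monotone F)
    (hF0 : ∀ x < 0, F x = 0) (hFrange : ∀ x, F x ∈ Set.Icc (0 : ℝ) 1)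
    (h0 : 0 ≤ cFd) (h1 : cFd ≤ cF) (h2 : cF ≤ cFu) (h3 : cFu < v)
    (h4 : cFd < cFu)
    (hpbF : 0 < pbF) (hpt : 0 ≤ pt)
    (ztilde : ℝ → ℝ)
    (hz : ztilde = fun pF => cF * pF + v * (∫ s in (0:ℝ)..(pt - pbF), F s)
        + cFu * (∫ s in (pt - pbF)..(pt - pF), F s)
        + cFd * (∫ s in (pt - pF)..pt, F s) - cFd * pF) :
    ConvexOn ℝ (Set.Icc (0 : ℝ) pbF) ztilde :=
  stmt1_general F v cF cFu cFd pbF pt hFcont hFmono h4 ztilde hz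
end

section
/- Let W be a nonnegative random variable with CDF F and density f. For given forward dispatch quantities p_F ∈ [0, p̄_F] and p_W ≥ 0, the expected balancing cost equals C = v·∫₀^{p_F + p_W − p̄_F} F(s)ds + c_F⁺·∫_{p_F + p_W − p̄_F}^{p_W} F(s)ds + c_F⁻·∫_{p_W}^{p_F + p_W} F(s)ds − c_F⁻·p_F, where the expected balancing cost is defined as E[v·s(W) + c_F⁺·p⁺(W) − c_F⁻·p⁻(W)] with: when W ≤ p_W, p⁺(W) = min(p̄_F − p_F, p_W − W), p⁻(W) = 0, s(W) = max(0, p_W − W − p̄_F + p_F); and when W > p_W, p⁺(W) = 0, p⁻(W) = min(p_F, W − p_W), s(W) = 0. -/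
/-!
Tonelli applied to the indicator of `{(ω, s) | W ω ≤ s}` turns `∫ s in lo..hi, F s` into
`𝔼[min (hi - lo) (hi - W)⁺]`, the expected length of `[lo, hi] ∩ [W, ∞)`. Pointwise in `W`,
the re-dispatch cost is an affine combination of three such truncations (with `lo = 0` for the
spill term, where `W ≥ 0` makes the truncation at `hi - lo` vacuous), so the closed form
follows by linearity of expectation.
-/

open MeasureTheory Set

lemma volume_real_Ici_inter_Ioc {lo hi : ℝ} (h : lo ≤ hi) (w : ℝ) :
    volume.real (Ici w ∩ Ioc lo hi) = min (hi - lo) (max 0 (hi - w)) := by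
  have hsub : Ioc (max lo w) hi ⊆ Ici w ∩ Ioc lo hi := fun s hs =>
    ⟨(le_max_right _ _).trans hs.1.le, (le_max_left _ _).trans_lt hs.1, hs.2⟩
  have hsup : Ici w ∩ Ioc lo hi ⊆ Icc (max lo w) hi := fun s hs =>
    ⟨max_le hs.2.1.le hs.1, hs.2.2⟩
  have hvol : volume.real (Ici w ∩ Ioc lo hi) = max (hi - max lo w) 0 :=
    le_antisymm (Real.volume_real_Icc ▸ measureReal_mono hsup measure_Icc_lt_top.ne)
      (Real.volume_real_Ioc ▸ measureReal_mono hsub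
        ((measure_mono hsup).trans_lt measure_Icc_lt_top).ne)
  rw [hvol]
  grind

section
variable {Ω : Type*} [MeasurableSpace Ω] (P : Measure Ω) [IsFiniteMeasure P]
  {W : Ω → ℝ}

lemma integral_measureReal_le_eq_integral_measureReal_Ici (hW : Measurable W)
    (ν : Measure ℝ) [IsFiniteMeasure ν] :
    ∫ s, P.real {ω | W ω ≤ s} ∂ν = ∫ ω, ν.real (Ici (W ω)) ∂P := by
  set S : Set (Ω × ℝ) := {p | W p.1 ≤ p.2}
  have hS : MeasurableSet S := measurableSet_le (hW.comp measurable_fst) measurable_snd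
  have hint : Integrable (Function.uncurry fun ω s => S.indicator (1 : Ω × ℝ → ℝ) (ω, s))
      (P.prod ν) := (integrable_const (1 : ℝ)).indicator hS
  have hslice_s : ∀ s, ∫ ω, S.indicator (1 : Ω × ℝ → ℝ) (ω, s) ∂P = P.real {ω | W ω ≤ s} :=
    fun s => integral_indicator_one (measurableSet_le hW measurable_const)
  have hslice_ω : ∀ ω, ∫ s, S.indicator (1 : Ω × ℝ → ℝ) (ω, s) ∂ν = ν.real (Ici (W ω)) :=
    fun ω => integral_indicator_one (s := Ici (W ω)) measurableSet_Ici
  simpa only [hslice_s, hslice_ω] using (integral_integral_swap hint).symm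

lemma intervalIntegral_cdf_eq_integral_min (hW : Measurable W) {lo hi : ℝ} (h : lo ≤ hi) :
    ∫ s in lo..hi, P.real {ω | W ω ≤ s} = ∫ ω, min (hi - lo) (max 0 (hi - W ω)) ∂P := by
  rw [intervalIntegral.integral_of_le h, integral_measureReal_le_eq_integral_measureReal_Ici P hW]
  simp only [measureReal_restrict_apply measurableSet_Ici, volume_real_Ici_inter_Ioc h]

lemma intervalIntegral_zero_cdf_eq_integral_max (hW : Measurable W) (hW0 : ∀ ω, 0 ≤ W ω) (c : ℝ) :
    ∫ s in (0 : ℝ)..c, P.real {ω | W ω ≤ s} = ∫ ω, max 0 (c - W ω) ∂P := by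
  rcases le_total 0 c with hc | hc
  · rw [intervalIntegral_cdf_eq_integral_min P hW hc, sub_zero]
    congr 1 with ω
    exact min_eq_right (max_le hc (by linarith [hW0 ω]))
  · rw [intervalIntegral.integral_symm, intervalIntegral_cdf_eq_integral_min P hW hc]
    have hmin : ∀ ω, min (0 - c) (max 0 (0 - W ω)) = 0 := fun ω => by grind
    have hmax : ∀ ω, max 0 (c - W ω) = 0 := fun ω => by grind
    simp only [hmin, hmax, integral_zero, neg_zero]

lemma integrable_min_max_zero_sub (hW : Measurable W) {a : ℝ} (ha : 0 ≤ a) (b : ℝ) :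
    Integrable (fun ω => min a (max 0 (b - W ω))) P :=
  .of_bound (by fun_prop) a (ae_of_all _ fun ω => by
    rw [Real.norm_of_nonneg (le_min ha (le_max_left _ _))]
    exact min_le_left _ _)

lemma integrable_max_zero_sub (hW : Measurable W) (hW0 : ∀ ω, 0 ≤ W ω) (c : ℝ) :
    Integrable (fun ω => max 0 (c - W ω)) P :=
  .of_bound (by fun_prop) (max 0 c) (ae_of_all _ fun ω => by
    rw [Real.norm_of_nonneg (le_max_left _ _)]
    exact max_le_max le_rfl (by linarith [hW0 ω]))

end

lemma redispatch_cost_eq (v cFu cFd pbF pF pW w : ℝ) (hpF0 : 0 ≤ pF) (hpFb : pF ≤ pbF) :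
    (if w ≤ pW then
        v * max 0 (pW - w - pbF + pF) + cFu * min (pbF - pF) (pW - w)
      else
        -(cFd * min pF (w - pW)))
    = v * max 0 (pF + pW - pbF - w) + cFu * min (pbF - pF) (max 0 (pW - w))
      + cFd * min pF (max 0 (pF + pW - w)) - cFd * pF := by
  split_ifs with h
  · have h1 : max 0 (pW - w) = pW - w := max_eq_right (by linarith)
    have h2 : min pF (max 0 (pF + pW - w)) = pF := by grind
    rw [h1, h2, show pW - w - pbF + pF = pF + pW - pbF - w by ring]
    ring
  · have h1 : max 0 (pF + pW - pbF - w) = 0 := max_eq_left (by linarith)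
    have h2 : min (pbF - pF) (max 0 (pW - w)) = 0 := by grind
    have h3 : min pF (max 0 (pF + pW - w)) = pF - min pF (w - pW) := by grind
    rw [h1, h2, h3]
    ring

theorem stmt4_general {Ω : Type*} [MeasurableSpace Ω] (P : Measure Ω) [IsProbabilityMeasure P]
    (W : Ω → ℝ) (hWmeas : Measurable W) (hWnn : ∀ ω, 0 ≤ W ω)
    (F : ℝ → ℝ) (hF : ∀ x, F x = (P {ω | W ω ≤ x}).toReal)
    (v cFu cFd pbF pF pW : ℝ)
    (hpF : pF ∈ Set.Icc (0 : ℝ) pbF)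
    (cost : ℝ → ℝ)
    (hcost : cost = fun w =>
      if w ≤ pW then
        v * max 0 (pW - w - pbF + pF) + cFu * min (pbF - pF) (pW - w)
      else
        -(cFd * min pF (w - pW))) :
    ∫ ω, cost (W ω) ∂P =
      v * (∫ s in (0:ℝ)..(pF + pW - pbF), F s)
      + cFu * (∫ s in (pF + pW - pbF)..pW, F s)
      + cFd * (∫ s in pW..(pF + pW), F s)
      - cFd * pF := by
  obtain ⟨hpF0, hpFb⟩ := hpF
  obtain rfl : F = fun s => P.real {ω | W ω ≤ s} := funext hF
  have E1 := intervalIntegral_zero_cdf_eq_integral_max P hWmeas hWnn (pF + pW - pbF)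
  have E2 := intervalIntegral_cdf_eq_integral_min P hWmeas
    (by linarith : pF + pW - pbF ≤ pW)
  have E3 := intervalIntegral_cdf_eq_integral_min P hWmeas (by linarith : pW ≤ pF + pW)
  rw [show pW - (pF + pW - pbF) = pbF - pF by ring] at E2
  rw [show pF + pW - pW = pF by ring] at E3
  have I1 := (integrable_max_zero_sub P hWmeas hWnn (pF + pW - pbF)).const_mul v
  have I2 := (integrable_min_max_zero_sub P hWmeas (sub_nonneg.2 hpFb) pW).const_mul cFu
  have I3 := (integrable_min_max_zero_sub P hWmeas hpF0 (pF + pW)).const_mul cFd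
  simp only [hcost, redispatch_cost_eq v cFu cFd pbF pF pW _ hpF0 hpFb]
  rw [integral_sub ((I1.fun_add I2).fun_add I3) (integrable_const _),
    integral_add (I1.fun_add I2) I3, integral_add I1 I2,
    integral_const_mul, integral_const_mul, integral_const_mul,
    E1, E2, E3, integral_const, probReal_univ, one_smul]

/-- closed form of the expected balancing cost (Proposition 2). -/
theorem stmt4 {Ω : Type*} [MeasurableSpace Ω] (P : Measure Ω) [IsProbabilityMeasure P]
    (W : Ω → ℝ) (hWmeas : Measurable W) (hWnn : ∀ ω, 0 ≤ W ω)
    (hWint : Integrable W P)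
    (F : ℝ → ℝ) (hF : ∀ x, F x = (P {ω | W ω ≤ x}).toReal)
    (hFcont : Continuous F)
    (v cFu cFd pbF pF pW : ℝ)
    (hv : cFu < v) (hud : cFd ≤ cFu) (hd : 0 ≤ cFd) (hpbF : 0 < pbF)
    (hpF : pF ∈ Set.Icc (0 : ℝ) pbF) (hpW : 0 ≤ pW)
    (cost : ℝ → ℝ)
    (hcost : cost = fun w =>
      if w ≤ pW then
        v * max 0 (pW - w - pbF + pF) + cFu * min (pbF - pF) (pW - w)
      else
        -(cFd * min pF (w - pW))) :
    ∫ ω, cost (W ω) ∂P =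
      v * (∫ s in (0:ℝ)..(pF + pW - pbF), F s)
      + cFu * (∫ s in (pF + pW - pbF)..pW, F s)
      + cFd * (∫ s in pW..(pF + pW), F s)
      - cFd * pF :=
  stmt4_general P W hWmeas hWnn F hF v cFu cFd pbF pF pW hpF cost hcost
end

section
/- Let F be a continuous CDF with F(x) = 0 for x < 0 and F(x) = 1 for x ≥ p̄_W, where p̄_W > 0. Define c̃(p̃) piecewise: c̃(p̃) = (v − c_F⁺)·F(p̃ − p̄_F) + c_F⁺·F(p̃) for 0 ≤ p̃ ≤ l₁; c̃(p̃) = c_F + (v − c_F⁺)·F(p̃ − p̄_F) − c_F⁻·(1 − F(p̃)) for l₁ < p̃ < l₁ + p̄_F; c̃(p̃) = (v − c_F⁻)·F(p̃ − p̄_F) + c_F⁻·F(p̃) for p̃ ≥ l₁ + p̄_F, where l₁ = F⁻¹((c_F − c_F⁻)/(c_F⁺ − c_F⁻)) and v > c_F⁺ ≥ c_F ≥ c_F⁻ ≥ 0, c_F⁺ > c_F⁻. Then c̃ is nondecreasing and continuous on [0, ∞). -/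
/-!
With `α = (c_F - c_F⁻) / (c_F⁺ - c_F⁻)`, continuity of `F` gives `F l₁ = α`, so the three
branches of `c̃` are exactly the three ways `F (p̃ - p̄_F) ≤ F p̃` can sit relative to `α`.
Hence, on all of `ℝ`,
`c̃ p̃ = k₁ (F (p̃ - p̄_F)) + k₂ (F p̃) - v α`, where `k y = a min(y, α) + b max(y, α)` with
nonnegative weights is monotone and continuous.
-/

open Set

theorem Continuous.apply_le_of_forall_lt {F : ℝ → ℝ} (hF : Continuous F) {a c : ℝ}
    (h : ∀ x < a, F x ≤ c) : F a ≤ c :=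
  (isClosed_le hF continuous_const).closure_subset_iff.2 (show Iio a ⊆ {x | F x ≤ c} from h)
    (show a ∈ closure (Iio a) by rw [closure_Iio]; exact self_mem_Iic)

theorem Continuous.apply_csInf_setOf_le_eq {F : ℝ → ℝ} (hF : Continuous F) {α : ℝ}
    (hne : {x | α ≤ F x}.Nonempty) (hbdd : BddBelow {x | α ≤ F x}) :
    F (sInf {x | α ≤ F x}) = α :=
  le_antisymm
    (hF.apply_le_of_forall_lt fun _ hx =>
      (not_le.1 (notMem_of_lt_csInf (s := {x | α ≤ F x}) hx hbdd)).le)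
    ((isClosed_le continuous_const hF).csInf_mem hne hbdd)

/-- At `α = 0` the set is all of `ℝ`, so `sInf` returns its junk value `0`, where `F` vanishes
by continuity. -/
theorem apply_quantile_eq {F : ℝ → ℝ} {pbW α : ℝ} (hFcont : Continuous F)
    (hFmono : Monotone F) (hF0 : ∀ x < 0, F x = 0) (hF1 : ∀ x ≥ pbW, F x = 1)
    (hα0 : 0 ≤ α) (hα1 : α ≤ 1) :
    F (sInf {x | α ≤ F x}) = α := by
  have hF_zero : F 0 = 0 :=
    le_antisymm (hFcont.apply_le_of_forall_lt fun x hx => (hF0 x hx).le)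
      ((hF0 (-1) (by norm_num)).ge.trans (hFmono (by norm_num)))
  rcases hα0.eq_or_lt with rfl | hα_pos
  · have hF_nonneg : ∀ x, 0 ≤ F x := fun x => by
      rcases lt_or_ge x 0 with hx | hx
      · exact (hF0 x hx).ge
      · exact hF_zero ▸ hFmono hx
    have hunbdd : ¬BddBelow {x | 0 ≤ F x} := by
      rintro ⟨b, hb⟩
      linarith [hb (hF_nonneg (b - 1))]
    rw [Real.sInf_of_not_bddBelow hunbdd, hF_zero]
  · refine hFcont.apply_csInf_setOf_le_eq ⟨pbW, by simpa [hF1 pbW le_rfl] using hα1⟩ ⟨0, ?_⟩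
    intro x hx
    by_contra! hneg
    linarith [hF0 x hneg, show α ≤ F x from hx]

section Kink

variable (a b α : ℝ)

def kink (y : ℝ) : ℝ := a * min y α + b * max y α

theorem kink_of_le {y : ℝ} (h : y ≤ α) : kink a b α y = a * y + b * α := by
  simp [kink, min_eq_left h, max_eq_right h]

theorem kink_of_ge {y : ℝ} (h : α ≤ y) : kink a b α y = a * α + b * y := by
  simp [kink, min_eq_right h, max_eq_left h]

theorem continuous_kink : Continuous (kink a b α) := by
  unfold kink
  fun_prop

variable {a b}

theorem monotone_kink (ha : 0 ≤ a) (hb : 0 ≤ b) : Monotone (kink a b α) := fun _ _ h =>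
  add_le_add (mul_le_mul_of_nonneg_left (min_le_min_right α h) ha)
    (mul_le_mul_of_nonneg_left (max_le_max_right α h) hb)

end Kink

theorem piecewise_eq_kink {F : ℝ → ℝ} (hFmono : Monotone F) {v cF cFu cFd pbF l1 α : ℝ}
    (hpbF : 0 ≤ pbF) (hFl1 : F l1 = α) (hα : (cFu - cFd) * α = cF - cFd) (pt : ℝ) :
    (if pt ≤ l1 then (v - cFu) * F (pt - pbF) + cFu * F pt
      else if pt < l1 + pbF then cF + (v - cFu) * F (pt - pbF) - cFd * (1 - F pt)
      else (v - cFd) * F (pt - pbF) + cFd * F pt) =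
    kink (v - cFu) (v - cFd) α (F (pt - pbF)) + kink cFu cFd α (F pt) - v * α := by
  split_ifs with h_le h_lt
  · rw [kink_of_le _ _ _ (hFl1 ▸ hFmono (by linarith)), kink_of_le _ _ _ (hFl1 ▸ hFmono h_le)]
    ring
  · rw [kink_of_le _ _ _ (hFl1 ▸ hFmono (by linarith)),
      kink_of_ge _ _ _ (hFl1 ▸ hFmono (le_of_not_ge h_le))]
    linear_combination -hα
  · rw [kink_of_ge _ _ _ (hFl1 ▸ hFmono (by linarith)),
      kink_of_ge _ _ _ (hFl1 ▸ hFmono (by linarith))]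
    ring

theorem stmt6_general
    (F : ℝ → ℝ) (v cF cFu cFd pbF pbW l1 : ℝ)
    (hFcont : Continuous F) (hFmono : Monotone F)
    (hF0 : ∀ x < 0, F x = 0) (hF1 : ∀ x ≥ pbW, F x = 1)
    (h0 : 0 ≤ cFd) (h1 : cFd ≤ cF) (h2 : cF ≤ cFu) (h3 : cFu < v)
    (h4 : cFd < cFu) (hpbF : 0 < pbF)
    (hl1 : l1 = sInf {x : ℝ | (cF - cFd) / (cFu - cFd) ≤ F x})
    (ctilde : ℝ → ℝ)
    (hc : ctilde = fun pt =>
      if pt ≤ l1 then (v - cFu) * F (pt - pbF) + cFu * F pt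
      else if pt < l1 + pbF then cF + (v - cFu) * F (pt - pbF) - cFd * (1 - F pt)
      else (v - cFd) * F (pt - pbF) + cFd * F pt) :
    MonotoneOn ctilde (Set.Ici (0 : ℝ)) ∧ ContinuousOn ctilde (Set.Ici (0 : ℝ)) := by
  set α := (cF - cFd) / (cFu - cFd)
  have hd : 0 < cFu - cFd := by linarith
  have hα : (cFu - cFd) * α = cF - cFd := mul_div_cancel₀ _ hd.ne'
  have hFl1 : F l1 = α := hl1 ▸ apply_quantile_eq hFcont hFmono hF0 hF1
    (div_nonneg (by linarith) hd.le) ((div_le_one hd).2 (by linarith))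
  have hc_eq : ctilde = fun pt =>
      kink (v - cFu) (v - cFd) α (F (pt - pbF)) + kink cFu cFd α (F pt) - v * α :=
    hc ▸ funext (piecewise_eq_kink hFmono hpbF.le hFl1 hα)
  rw [hc_eq]
  refine ⟨Monotone.monotoneOn (fun x y hxy => ?_) _, Continuous.continuousOn ?_⟩
  · exact sub_le_sub_right (add_le_add
      (monotone_kink α (by linarith) (by linarith) (hFmono (sub_le_sub_right hxy pbF)))
      (monotone_kink α (by linarith) h0 (hFmono hxy))) _
  · have := continuous_kink (v - cFu) (v - cFd) α
    have := continuous_kink cFu cFd α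
    fun_prop

/-- the marginal cost c̃ of the flexible-stochastic portfolio is
nondecreasing and continuous on [0, ∞). -/
theorem stmt6
    (F : ℝ → ℝ) (v cF cFu cFd pbF pbW l1 : ℝ)
    (hFcont : Continuous F) (hFmono : Monotone F)
    (hF0 : ∀ x < 0, F x = 0) (hF1 : ∀ x ≥ pbW, F x = 1)
    (hFrange : ∀ x, F x ∈ Set.Icc (0 : ℝ) 1)
    (h0 : 0 ≤ cFd) (h1 : cFd ≤ cF) (h2 : cF ≤ cFu) (h3 : cFu < v)
    (h4 : cFd < cFu) (hpbF : 0 < pbF) (hpbW : 0 < pbW)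
    (hl1 : l1 = sInf {x : ℝ | (cF - cFd) / (cFu - cFd) ≤ F x})
    (ctilde : ℝ → ℝ)
    (hc : ctilde = fun pt =>
      if pt ≤ l1 then (v - cFu) * F (pt - pbF) + cFu * F pt
      else if pt < l1 + pbF then cF + (v - cFu) * F (pt - pbF) - cFd * (1 - F pt)
      else (v - cFd) * F (pt - pbF) + cFd * F pt) :
    MonotoneOn ctilde (Set.Ici (0 : ℝ)) ∧ ContinuousOn ctilde (Set.Ici (0 : ℝ)) :=
  stmt6_general F v cF cFu cFd pbF pbW l1 hFcont hFmono hF0 hF1 h0 h1 h2 h3 h4 hpbF hl1 ctilde hc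
end

section
/- (Capacity-adequate simplification of l₃) Suppose F is a continuous CDF with F(x) = 0 for x ≤ 0 and F(x) = 1 for x ≥ p̄_W, where p̄_F ≥ p̄_W > 0, v > c_F⁺ ≥ c_F > c_I > 0 and c_F ≥ c_F⁻ > 0. Let l₁ = F⁻¹((c_F − c_F⁻)/(c_F⁺ − c_F⁻)). Then l₃ = min{ l ≥ l₁ : c_F + (v − c_F⁺)·F(l − p̄_F) − c_F⁻·(1 − F(l)) ≥ c_I } satisfies l₃ = max(l₁, F⁻¹(1 − (c_F − c_I)/c_F⁻)) and l₁ ≤ l₃ ≤ p̄_F. -/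
/-!
Both quantile levels are at most `1`, so `l₁` and `F⁻¹(1 − (c_F − c_I)/c_F⁻)` lie in
`[0, p̄_W] ⊆ [0, p̄_F]`. For `l ≤ p̄_F` the term `F (l − p̄_F)` vanishes and the constraint
defining `l₃` becomes `1 − (c_F − c_I)/c_F⁻ ≤ F l`, while every `l ≥ p̄_F` already exceeds
both quantiles. Hence the constraint set of `l₃` has least element the maximum of the two
quantiles.
-/

open Set

theorem isLeast_sInf_setOf_le_apply {F : ℝ → ℝ} {γ : ℝ} (hFcont : Continuous F)
    (hF0 : ∀ x ≤ 0, F x = 0) (hγ : ∃ b, γ ≤ F b) :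
    IsLeast {x | 0 ≤ x ∧ γ ≤ F x} (sInf {x | γ ≤ F x}) := by
  rcases le_or_gt γ 0 with hγ0 | hγ0
  · -- every `x ≤ 0` lies in the set, so `sInf` takes its junk value `0`
    have hunbdd : ¬ BddBelow {x | γ ≤ F x} := by
      refine not_bddBelow_iff.2 fun x => ⟨min x 0 - 1, ?_, by linarith [min_le_left x 0]⟩
      show γ ≤ F _
      rw [hF0 _ (by linarith [min_le_right x 0])]
      exact hγ0
    rw [Real.sInf_of_not_bddBelow hunbdd]
    exact ⟨⟨le_rfl, (hF0 0 le_rfl).symm ▸ hγ0⟩, fun x hx => hx.1⟩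
  · have hpos : ∀ x ∈ {x | γ ≤ F x}, 0 < x := fun x hx => by
      by_contra! hx0
      linarith [hF0 x hx0, show γ ≤ F x from hx]
    have hbdd : BddBelow {x | γ ≤ F x} := ⟨0, fun x hx => (hpos x hx).le⟩
    have hmem := (isClosed_le continuous_const hFcont).csInf_mem hγ hbdd
    exact ⟨⟨(hpos _ hmem).le, hmem⟩, fun x hx => csInf_le hbdd hx.2⟩

theorem le_sub_mul_one_sub_iff {a b c y : ℝ} (hc : 0 < c) :
    b ≤ a - c * (1 - y) ↔ 1 - (a - b) / c ≤ y := by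
  rw [sub_le_comm, le_div_iff₀ hc]
  constructor <;> intro h <;> linarith

theorem isLeast_setOf_capacity_constraint {F : ℝ → ℝ} {k cF cFd cI pbF l1 L : ℝ}
    (hFmono : Monotone F) (hF0 : ∀ x ≤ 0, F x = 0) (hcd : 0 < cFd)
    (hl1 : 0 ≤ l1) (hl1pbF : l1 ≤ pbF) (hLpbF : L ≤ pbF)
    (hL : IsLeast {x | 0 ≤ x ∧ 1 - (cF - cI) / cFd ≤ F x} L) :
    IsLeast {l | l1 ≤ l ∧ cI ≤ cF + k * F (l - pbF) - cFd * (1 - F l)} (max l1 L) := by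
  have hconstraint : ∀ l ≤ pbF,
      cI ≤ cF + k * F (l - pbF) - cFd * (1 - F l) ↔ 1 - (cF - cI) / cFd ≤ F l := by
    intro l hl
    rw [hF0 _ (by linarith), mul_zero, add_zero, le_sub_mul_one_sub_iff hcd]
  refine ⟨⟨le_max_left _ _, (hconstraint _ (max_le hl1pbF hLpbF)).2 ?_⟩, ?_⟩
  · exact hL.1.2.trans (hFmono (le_max_right _ _))
  · rintro l ⟨hl1l, hl⟩
    refine max_le hl1l ?_
    rcases le_or_gt pbF l with hpbFl | hlpbF
    · exact hLpbF.trans hpbFl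
    · exact hL.2 ⟨hl1.trans hl1l, (hconstraint l hlpbF.le).1 hl⟩

theorem stmt8_general
    (F : ℝ → ℝ) (v cF cFu cFd cI pbF pbW l1 l3 : ℝ)
    (hFcont : Continuous F) (hFmono : Monotone F)
    (hF0 : ∀ x ≤ 0, F x = 0) (hF1 : ∀ x ≥ pbW, F x = 1)
    (hpbW : 0 < pbW) (hcap : pbW ≤ pbF)
    (hIc : cI < cF) (hcu : cF ≤ cFu)
    (hcd : 0 < cFd) (hud : cFd < cFu)
    (hl1 : l1 = sInf {x : ℝ | (cF - cFd) / (cFu - cFd) ≤ F x})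
    (hl3 : l3 = sInf {l : ℝ | l1 ≤ l ∧
        cI ≤ cF + (v - cFu) * F (l - pbF) - cFd * (1 - F l)}) :
    l3 = max l1 (sInf {x : ℝ | 1 - (cF - cI) / cFd ≤ F x}) ∧
      l1 ≤ l3 ∧ l3 ≤ pbF := by
  have hα : (cF - cFd) / (cFu - cFd) ≤ F pbW := by
    rw [hF1 pbW le_rfl]
    exact div_le_one_of_le₀ (by linarith) (by linarith)
  have hβ : 1 - (cF - cI) / cFd ≤ F pbW := by
    rw [hF1 pbW le_rfl]
    linarith [div_pos (sub_pos.2 hIc) hcd]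
  have hl1least := isLeast_sInf_setOf_le_apply hFcont hF0 ⟨pbW, hα⟩
  have hL2least := isLeast_sInf_setOf_le_apply hFcont hF0 ⟨pbW, hβ⟩
  rw [← hl1] at hl1least
  have hl1pbF : l1 ≤ pbF := (hl1least.2 ⟨hpbW.le, hα⟩).trans hcap
  have hL2pbF := (hL2least.2 ⟨hpbW.le, hβ⟩).trans hcap
  have hl3eq : l3 = max l1 (sInf {x : ℝ | 1 - (cF - cI) / cFd ≤ F x}) := by
    rw [hl3]
    exact (isLeast_setOf_capacity_constraint hFmono hF0 hcd hl1least.1.1 hl1pbF hL2pbF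
      hL2least).csInf_eq
  exact ⟨hl3eq, hl3eq ▸ le_max_left _ _, hl3eq ▸ max_le hl1pbF hL2pbF⟩

/-- capacity-adequate simplification of l₃:
l₃ = max(l₁, F⁻¹(1 − (c_F − c_I)/c_F⁻)) and l₁ ≤ l₃ ≤ p̄_F. -/
theorem stmt8
    (F : ℝ → ℝ) (v cF cFu cFd cI pbF pbW l1 l3 : ℝ)
    (hFcont : Continuous F) (hFmono : Monotone F)
    (hF0 : ∀ x ≤ 0, F x = 0) (hF1 : ∀ x ≥ pbW, F x = 1)
    (hFrange : ∀ x, F x ∈ Set.Icc (0 : ℝ) 1)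
    (hpbW : 0 < pbW) (hcap : pbW ≤ pbF)
    (hcI : 0 < cI) (hIc : cI < cF) (hcu : cF ≤ cFu) (hv : cFu < v)
    (hcd : 0 < cFd) (hdc : cFd ≤ cF) (hud : cFd < cFu)
    (hl1 : l1 = sInf {x : ℝ | (cF - cFd) / (cFu - cFd) ≤ F x})
    (hl3 : l3 = sInf {l : ℝ | l1 ≤ l ∧
        cI ≤ cF + (v - cFu) * F (l - pbF) - cFd * (1 - F l)}) :
    l3 = max l1 (sInf {x : ℝ | 1 - (cF - cI) / cFd ≤ F x}) ∧
      l1 ≤ l3 ∧ l3 ≤ pbF :=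
  stmt8_general F v cF cFu cFd cI pbF pbW l1 l3 hFcont hFmono hF0 hF1 hpbW hcap hIc hcu hcd hud hl1
    hl3
end

section
/- (Ordering of threshold loads) Let F be a nondecreasing function with values in [0,1], F(x) = 0 for x < 0, and let v > c_F⁺ ≥ c_F ≥ c_F⁻ ≥ 0, 0 < c_I < c_F, p̄_F > 0, p̄_I > 0. Define l₂ = min{l ≥ 0 : (v − c_F⁺)F(l − p̄_F) + c_F⁺F(l) ≥ c_I}, l₅ = min{l ≥ 0 : (v − c_F⁺)F(l − p̄_F − p̄_I) + c_F⁺F(l − p̄_I) ≥ c_F}, and l₆ = min{l ≥ 0 : (v − c_F⁻)F(l − p̄_F − p̄_I) + c_F⁻F(l − p̄_I) ≥ c_F}, whenever these minima exist. Then l₂ ≤ l₅ ≤ l₆. -/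
open Set Filter

/-! With F nondecreasing, each threshold condition is a nondecreasing function of the load l, so
shifting the load by p̄_I or lowering the required level c_F to c_I only enlarges the set of
admissible loads; and as F(l - p̄_F - p̄_I) ≤ F(l - p̄_I), the condition for c_F⁺ is weaker than the
one for c_F⁻. Comparing the least elements of these sets gives the two inequalities. -/

theorem Monotone.weighted_add_shift {F : ℝ → ℝ} (hF : Monotone F) {α β p : ℝ}
    (hα : 0 ≤ α) (hβ : 0 ≤ β) : Monotone fun l => α * F (l - p) + β * F l :=
  fun _ _ hxy => add_le_add (mul_le_mul_of_nonneg_left (hF (by linarith)) hα)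
    (mul_le_mul_of_nonneg_left (hF hxy) hβ)

theorem sub_mul_add_mul_le_sub_mul_add_mul {v c c' A B : ℝ} (hAB : A ≤ B) (hc : c ≤ c') :
    (v - c) * A + c * B ≤ (v - c') * A + c' * B := by
  nlinarith [mul_nonneg (sub_nonneg.2 hc) (sub_nonneg.2 hAB)]

theorem stmt9_general
    (F : ℝ → ℝ) (v cF cFu cFd cI pbF pbI l2 l5 l6 : ℝ)
    (hFmono : Monotone F)
    (hv : cFu < v) (hcu : cF ≤ cFu) (hdc : cFd ≤ cF) (hcd : 0 ≤ cFd)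
    (hIc : cI < cF) (hpbF : 0 < pbF) (hpbI : 0 < pbI)
    (hl2 : IsLeast {l : ℝ | 0 ≤ l ∧ cI ≤ (v - cFu) * F (l - pbF) + cFu * F l} l2)
    (hl5 : IsLeast {l : ℝ | 0 ≤ l ∧
        cF ≤ (v - cFu) * F (l - pbF - pbI) + cFu * F (l - pbI)} l5)
    (hl6 : IsLeast {l : ℝ | 0 ≤ l ∧
        cF ≤ (v - cFd) * F (l - pbF - pbI) + cFd * F (l - pbI)} l6) :
    l2 ≤ l5 ∧ l5 ≤ l6 := by
  obtain ⟨⟨hl5_nonneg, hl5_load⟩, hl5_least⟩ := hl5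
  obtain ⟨⟨hl6_nonneg, hl6_load⟩, -⟩ := hl6
  have hshift : (v - cFu) * F (l5 - pbF - pbI) + cFu * F (l5 - pbI)
      ≤ (v - cFu) * F (l5 - pbF) + cFu * F l5 := by
    rw [sub_right_comm]
    exact hFmono.weighted_add_shift (sub_nonneg.2 hv.le) (by linarith) (by linarith)
  have hcoeff : (v - cFd) * F (l6 - pbF - pbI) + cFd * F (l6 - pbI)
      ≤ (v - cFu) * F (l6 - pbF - pbI) + cFu * F (l6 - pbI) :=
    sub_mul_add_mul_le_sub_mul_add_mul (hFmono (by linarith)) (hdc.trans hcu)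
  exact ⟨hl2.2 ⟨hl5_nonneg, hIc.le.trans (hl5_load.trans hshift)⟩,
    hl5_least ⟨hl6_nonneg, hl6_load.trans hcoeff⟩⟩

/-- ordering of the threshold loads l₂ ≤ l₅ ≤ l₆. -/
theorem stmt9
    (F : ℝ → ℝ) (v cF cFu cFd cI pbF pbI l2 l5 l6 : ℝ)
    (hFmono : Monotone F)
    (hFrc : ∀ x, ContinuousWithinAt F (Set.Ici x) x)
    (hF0 : ∀ x < 0, F x = 0)
    (hFrange : ∀ x, F x ∈ Set.Icc (0 : ℝ) 1)
    (hFlim : Tendsto F atTop (nhds 1))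
    (hv : cFu < v) (hcu : cF ≤ cFu) (hdc : cFd ≤ cF) (hcd : 0 ≤ cFd)
    (hcI : 0 < cI) (hIc : cI < cF) (hpbF : 0 < pbF) (hpbI : 0 < pbI)
    (hl2 : IsLeast {l : ℝ | 0 ≤ l ∧ cI ≤ (v - cFu) * F (l - pbF) + cFu * F l} l2)
    (hl5 : IsLeast {l : ℝ | 0 ≤ l ∧
        cF ≤ (v - cFu) * F (l - pbF - pbI) + cFu * F (l - pbI)} l5)
    (hl6 : IsLeast {l : ℝ | 0 ≤ l ∧
        cF ≤ (v - cFd) * F (l - pbF - pbI) + cFd * F (l - pbI)} l6) :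
    l2 ≤ l5 ∧ l5 ≤ l6 :=
  stmt9_general F v cF cFu cFd cI pbF pbI l2 l5 l6 hFmono hv hcu hdc hcd hIc hpbF hpbI hl2 hl5 hl6
end

section
/- (Cost comparison in the centralized dispatch) Let A(s) = (v − c_F⁺)F(s − p̄_F) + c_F⁺F(s), where F is a continuous CDF with F(x) = 0 for x < 0 and v > c_F⁺ > 0, p̄_F > 0. Let l₂ = min{l ≥ 0 : A(l) ≥ c_I} with 0 < c_I. Define z¹(l) = ∫₀^{min(l, l₂)} A(s)ds + c_I·max(l − l₂, 0) and, for l₂ ≤ l₁ and p̄_I ≤ l ≤ l₂ + p̄_I, z²(l) = c_I·p̄_I + ∫₀^{l − p̄_I} A(s)ds. Then for all l with p̄_I ≤ l ≤ l₂ + p̄_I it holds that z¹(l) ≤ z²(l), with equality at l = l₂ + p̄_I. -/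
/-!
Below `l₂` the marginal cost `A` of the flexible dispatch stays under `c_I`, by minimality of
`l₂`. Dispatching the inflexible unit only partially therefore replaces the cost `c_I` of the
load slice between `l - p̄_I` and `min l l₂` by the integral of `A` over it, which is no larger.
-/

open Set intervalIntegral

theorem lt_of_mem_Ico_of_mem_lowerBounds {f : ℝ → ℝ} {c l₂ s : ℝ}
    (h : l₂ ∈ lowerBounds {l : ℝ | 0 ≤ l ∧ c ≤ f l}) (hs : s ∈ Ico 0 l₂) : f s < c :=
  not_le.mp fun hc => (h ⟨hs.1, hc⟩).not_gt hs.2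

theorem integral_min_add_mul_max_le {f : ℝ → ℝ} {c l₂ p l : ℝ}
    (hf : ∀ a b, IntervalIntegrable f MeasureTheory.volume a b)
    (hfc : ∀ s ∈ Ioo 0 l₂, f s ≤ c) (hp : 0 ≤ p) (hpl : p ≤ l) (hl : l ≤ l₂ + p) :
    (∫ s in (0 : ℝ)..min l l₂, f s) + c * max (l - l₂) 0 ≤ c * p + ∫ s in (0 : ℝ)..l - p, f s := by
  set m := min l l₂
  have hm : l - p ≤ m := le_min (by linarith) (by linarith)
  have hsplit : (∫ s in (0 : ℝ)..l - p, f s) + (∫ s in l - p..m, f s) = ∫ s in (0 : ℝ)..m, f s :=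
    integral_add_adjacent_intervals (hf _ _) (hf _ _)
  have hslice : (∫ s in l - p..m, f s) ≤ c * (m - (l - p)) := by
    have := integral_mono_on_of_le_Ioo hm (hf _ _) intervalIntegrable_const fun s hs =>
      hfc s ⟨by linarith [hs.1], hs.2.trans_le (min_le_right _ _)⟩
    simpa [mul_comm] using this
  have hmax : max (l - l₂) 0 = l - m := by
    rcases le_total l l₂ with h | h
    · simp [m, min_eq_left h, max_eq_right (sub_nonpos.mpr h)]
    · simp [m, min_eq_right h, max_eq_left (sub_nonneg.mpr h)]
  rw [hmax]
  linarith

theorem stmt12_general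
    (F : ℝ → ℝ) (v cFu cI pbF pbI l2 : ℝ)
    (hFcont : Continuous F)
    (hpbI : 0 < pbI)
    (A : ℝ → ℝ) (hA : A = fun s => (v - cFu) * F (s - pbF) + cFu * F s)
    (hl2 : IsLeast {l : ℝ | 0 ≤ l ∧ cI ≤ A l} l2)
    (z1 z2 : ℝ → ℝ)
    (hz1 : z1 = fun l => (∫ s in (0:ℝ)..(min l l2), A s) + cI * max (l - l2) 0)
    (hz2 : z2 = fun l => cI * pbI + ∫ s in (0:ℝ)..(l - pbI), A s) :
    (∀ l, pbI ≤ l → l ≤ l2 + pbI → z1 l ≤ z2 l) ∧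
      z1 (l2 + pbI) = z2 (l2 + pbI) := by
  have hAcont : Continuous A := by subst hA; fun_prop
  subst hz1 hz2
  refine ⟨fun l hl hl' => integral_min_add_mul_max_le hAcont.intervalIntegrable
    (fun s hs => (lt_of_mem_Ico_of_mem_lowerBounds hl2.2 (Ioo_subset_Ico_self hs)).le)
    hpbI.le hl hl', ?_⟩
  simp [hpbI.le, add_comm]

/-- cost comparison in the centralized dispatch: z¹(l) ≤ z²(l)
for p̄_I ≤ l ≤ l₂ + p̄_I, with equality at l = l₂ + p̄_I. -/
theorem stmt12
    (F : ℝ → ℝ) (v cFu cI pbF pbI l2 : ℝ)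
    (hFcont : Continuous F) (hFmono : Monotone F)
    (hF0 : ∀ x < 0, F x = 0) (hFrange : ∀ x, F x ∈ Set.Icc (0 : ℝ) 1)
    (hv : cFu < v) (hcu : 0 < cFu) (hpbF : 0 < pbF) (hpbI : 0 < pbI)
    (hcI : 0 < cI)
    (A : ℝ → ℝ) (hA : A = fun s => (v - cFu) * F (s - pbF) + cFu * F s)
    (hl2 : IsLeast {l : ℝ | 0 ≤ l ∧ cI ≤ A l} l2)
    (z1 z2 : ℝ → ℝ)
    (hz1 : z1 = fun l => (∫ s in (0:ℝ)..(min l l2), A s) + cI * max (l - l2) 0)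
    (hz2 : z2 = fun l => cI * pbI + ∫ s in (0:ℝ)..(l - pbI), A s) :
    (∀ l, pbI ≤ l → l ≤ l2 + pbI → z1 l ≤ z2 l) ∧
      z1 (l2 + pbI) = z2 (l2 + pbI) :=
  stmt12_general F v cFu cI pbF pbI l2 hFcont hpbI A hA hl2 z1 z2 hz1 hz2
end

section
/- (Derivative of cost difference is nonpositive) With A(s) = (v − c_F⁺)F(s − p̄_F) + c_F⁺F(s) as above (A nondecreasing, A(s) ≤ c_I for s ≤ l₂), define D(l) = z²(l) − z¹(l) = c_I·(p̄_I − max(l − l₂, 0)) − ∫_{l − p̄_I}^{min(l, l₂)} A(s)ds for p̄_I ≤ l ≤ l₂ + p̄_I. Then D is differentiable a.e. with D′(l) = −c_I + A(l − p̄_I) ≤ 0 when l ≥ l₂, and D′(l) = −A(l) + A(l − p̄_I) ≤ 0 when l < l₂. Consequently D is nonincreasing on [p̄_I, l₂ + p̄_I]. -/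
/-!
On `l < l₂` the cost difference is `c_I p̄_I` minus the integral of `A` over the sliding
window `[l - p̄_I, l]`, whose derivative `A l - A (l - p̄_I)` is nonnegative because `A` is
nondecreasing. On `l > l₂` the upper endpoint is frozen at `l₂`, so the derivative is
`-c_I + A (l - p̄_I)`, nonpositive as long as `l - p̄_I < l₂`, where `A ≤ c_I`. Continuity at
the kink `l = l₂` glues the two monotone pieces.
-/

open Set intervalIntegral Filter Topology

noncomputable def costDiff (A : ℝ → ℝ) (c p l₂ l : ℝ) : ℝ :=
  c * (p - max (l - l₂) 0) - ∫ s in (l - p)..(min l l₂), A s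

section CostDiff

variable {A : ℝ → ℝ}

theorem hasDerivAt_integral_sub_const_left (hA : Continuous A) (p b x : ℝ) :
    HasDerivAt (fun l => ∫ s in (l - p)..b, A s) (-A (x - p)) x :=
  (integral_hasDerivAt_left (hA.intervalIntegrable _ _)
    hA.aestronglyMeasurable.stronglyMeasurableAtFilter hA.continuousAt).comp_sub_const x p

theorem hasDerivAt_integral_window (hA : Continuous A) (p x : ℝ) :
    HasDerivAt (fun l => ∫ s in (l - p)..l, A s) (A x - A (x - p)) x := by
  have hsplit : (fun l => ∫ s in (l - p)..l, A s) =
      fun l => (∫ s in (l - p)..0, A s) + ∫ s in (0 : ℝ)..l, A s := by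
    ext l
    rw [integral_add_adjacent_intervals (hA.intervalIntegrable _ _) (hA.intervalIntegrable _ _)]
  rw [hsplit]
  exact ((hasDerivAt_integral_sub_const_left hA p 0 x).add
    (hA.integral_hasStrictDerivAt 0 x).hasDerivAt).congr_deriv (by ring)

variable {c p l₂ : ℝ}

theorem continuous_costDiff (hA : Continuous A) : Continuous (costDiff A c p l₂) := by
  have hprimitive : Continuous fun b => ∫ s in (0 : ℝ)..b, A s :=
    continuous_primitive (fun a b => hA.intervalIntegrable a b) 0
  have hint (l : ℝ) : ∫ s in (l - p)..(min l l₂), A s =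
      (∫ s in (0 : ℝ)..(min l l₂), A s) - ∫ s in (0 : ℝ)..(l - p), A s :=
    (integral_interval_sub_left (hA.intervalIntegrable _ _) (hA.intervalIntegrable _ _)).symm
  unfold costDiff
  simp only [hint]
  fun_prop

theorem hasDerivAt_costDiff_of_lt (hA : Continuous A) {x : ℝ} (hx : x < l₂) :
    HasDerivAt (costDiff A c p l₂) (-A x + A (x - p)) x := by
  have hloc : (fun l => c * p - ∫ s in (l - p)..l, A s) =ᶠ[𝓝 x] costDiff A c p l₂ := by
    filter_upwards [eventually_lt_nhds hx] with l hl
    simp [costDiff, min_eq_left hl.le, max_eq_right (sub_nonpos.2 hl.le)]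
  exact (((hasDerivAt_integral_window hA p x).const_sub (c * p)).congr_deriv (by ring))
    |>.congr_of_eventuallyEq hloc.symm

theorem hasDerivAt_costDiff_of_gt (hA : Continuous A) {x : ℝ} (hx : l₂ < x) :
    HasDerivAt (costDiff A c p l₂) (-c + A (x - p)) x := by
  have hloc : (fun l => c * (p - (l - l₂)) - ∫ s in (l - p)..l₂, A s) =ᶠ[𝓝 x]
      costDiff A c p l₂ := by
    filter_upwards [eventually_gt_nhds hx] with l hl
    simp [costDiff, min_eq_right hl.le, max_eq_left (sub_nonneg.2 hl.le)]
  have hderiv := ((((hasDerivAt_id x).sub_const l₂).const_sub p).const_mul c).sub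
    (hasDerivAt_integral_sub_const_left hA p l₂ x)
  exact (hderiv.congr_deriv (by ring)).congr_of_eventuallyEq hloc.symm

theorem antitoneOn_costDiff (hA : Continuous A) (hAmono : Monotone A) (hp : 0 ≤ p)
    (hAle : ∀ s < l₂, A s ≤ c) : AntitoneOn (costDiff A c p l₂) (Iic (l₂ + p)) := by
  have hcont {s : Set ℝ} : ContinuousOn (costDiff A c p l₂) s :=
    (continuous_costDiff hA).continuousOn
  have hleft : AntitoneOn (costDiff A c p l₂) (Iic l₂) := by
    refine antitoneOn_of_hasDerivWithinAt_nonpos (convex_Iic _) hcont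
      (fun x hx => (hasDerivAt_costDiff_of_lt hA ?_).hasDerivWithinAt) fun x hx => ?_
    · simpa using hx
    · linarith [hAmono (show x - p ≤ x by linarith)]
  have hright : AntitoneOn (costDiff A c p l₂) (Icc l₂ (l₂ + p)) := by
    refine antitoneOn_of_hasDerivWithinAt_nonpos (convex_Icc _ _) hcont
      (fun x hx => (hasDerivAt_costDiff_of_gt hA ?_).hasDerivWithinAt) fun x hx => ?_
    · simp only [interior_Icc, mem_Ioo] at hx
      exact hx.1
    · simp only [interior_Icc, mem_Ioo] at hx
      linarith [hAle (x - p) (by linarith)]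
  exact (hleft.union_right hright isGreatest_Iic (isLeast_Icc (by linarith))).mono
    Iic_subset_Iic_union_Icc

end CostDiff

theorem apply_le_of_lt_of_isLeast {A : ℝ → ℝ} {c l₂ s : ℝ} (hneg : ∀ s < 0, A s ≤ c)
    (hl₂ : IsLeast {l | 0 ≤ l ∧ c ≤ A l} l₂) (hs : s < l₂) : A s ≤ c := by
  by_contra! h
  rcases lt_or_ge s 0 with hs0 | hs0
  · exact h.not_ge (hneg s hs0)
  · exact hs.not_ge (hl₂.2 ⟨hs0, h.le⟩)

theorem stmt13_general
    (F : ℝ → ℝ) (v cFu cI pbF pbI l2 : ℝ)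
    (hFcont : Continuous F) (hFmono : Monotone F)
    (hF0 : ∀ x < 0, F x = 0)
    (hv : cFu < v) (hcu : 0 ≤ cFu) (hpbF : 0 < pbF) (hpbI : 0 < pbI)
    (hcI : 0 < cI)
    (A : ℝ → ℝ) (hA : A = fun s => (v - cFu) * F (s - pbF) + cFu * F s)
    (hl2 : IsLeast {l : ℝ | 0 ≤ l ∧ cI ≤ A l} l2)
    (D : ℝ → ℝ)
    (hD : D = fun l => cI * (pbI - max (l - l2) 0) - ∫ s in (l - pbI)..(min l l2), A s) :
    (∀ l, pbI ≤ l → l < l2 + pbI → l2 < l →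
        HasDerivAt D (-cI + A (l - pbI)) l ∧ -cI + A (l - pbI) ≤ 0) ∧
    (∀ l, pbI < l → l ≤ l2 + pbI → l < l2 →
        HasDerivAt D (-(A l) + A (l - pbI)) l ∧ -(A l) + A (l - pbI) ≤ 0) ∧
    AntitoneOn D (Set.Icc pbI (l2 + pbI)) := by
  obtain rfl : D = costDiff A cI pbI l2 := hD
  have hAcont : Continuous A := hA ▸ by fun_prop
  have hAmono : Monotone A := hA ▸
    ((hFmono.comp fun _ _ h => sub_le_sub_right h pbF).const_mul (sub_nonneg.2 hv.le)).add
      (hFmono.const_mul hcu)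
  have hAneg : ∀ s < 0, A s ≤ cI := fun s hs => by
    simp [hA, hF0 s hs, hF0 (s - pbF) (by linarith), hcI.le]
  have hAle : ∀ s < l2, A s ≤ cI := fun _ => apply_le_of_lt_of_isLeast hAneg hl2
  refine ⟨fun l _ _ hl => ⟨hasDerivAt_costDiff_of_gt hAcont hl, ?_⟩,
    fun l _ _ hl => ⟨hasDerivAt_costDiff_of_lt hAcont hl, ?_⟩,
    (antitoneOn_costDiff hAcont hAmono hpbI.le hAle).mono Icc_subset_Iic_self⟩
  · linarith [hAle (l - pbI) (by linarith)]
  · linarith [hAmono (show l - pbI ≤ l by linarith)]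

/-- the cost difference D(l) = z²(l) − z¹(l) has nonpositive
derivative (a.e.) and is nonincreasing on [p̄_I, l₂ + p̄_I]. -/
theorem stmt13
    (F : ℝ → ℝ) (v cFu cI pbF pbI l2 : ℝ)
    (hFcont : Continuous F) (hFmono : Monotone F)
    (hF0 : ∀ x < 0, F x = 0) (hFrange : ∀ x, F x ∈ Set.Icc (0 : ℝ) 1)
    (hv : cFu < v) (hcu : 0 ≤ cFu) (hpbF : 0 < pbF) (hpbI : 0 < pbI)
    (hcI : 0 < cI)
    (A : ℝ → ℝ) (hA : A = fun s => (v - cFu) * F (s - pbF) + cFu * F s)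
    (hl2 : IsLeast {l : ℝ | 0 ≤ l ∧ cI ≤ A l} l2)
    (D : ℝ → ℝ)
    (hD : D = fun l => cI * (pbI - max (l - l2) 0) - ∫ s in (l - pbI)..(min l l2), A s) :
    (∀ l, pbI ≤ l → l < l2 + pbI → l2 < l →
        HasDerivAt D (-cI + A (l - pbI)) l ∧ -cI + A (l - pbI) ≤ 0) ∧
    (∀ l, pbI < l → l ≤ l2 + pbI → l < l2 →
        HasDerivAt D (-(A l) + A (l - pbI)) l ∧ -(A l) + A (l - pbI) ≤ 0) ∧
    AntitoneOn D (Set.Icc pbI (l2 + pbI)) :=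
  stmt13_general F v cFu cI pbF pbI l2 hFcont hFmono hF0 hv hcu hpbF hpbI hcI A hA hl2 D hD
end
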